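/- arXiv:2009.00641 — 2 statements merged into one kernel-verified Lean document; each statement's English description precedes it below -/
import Mathlib

section
/- (Regularized control converges to the orthogonal projection.) Let A : X → Y be a bounded linear operator between two Hilbert spaces X and Y. For any y ∈ Y and α > 0, set x_α := (A* A + α I)⁻¹ A* y. Then A x_α converges in Y, as α → 0⁺, to P_{cl(Ran A)} y, the orthogonal projection of y onto the closure of the range of A. -/
open Filter Topology RCLike
open scoped InnerProductSpace

/-!
`x_α` minimises the Tikhonov functional `u ↦ ‖A u - y‖² + α ‖u‖²`. Since `A u - y` splits
orthogonally into `(A u - P y) + (P y - y)` for `P` the projection onto `cl (Ran A)`, comparing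
with any fixed `u` gives `‖A x_α - P y‖² ≤ ‖A u - P y‖² + α ‖u‖²`. Letting `α → 0` and then
choosing `A u` close to `P y` proves the convergence.
-/

theorem Submodule.norm_sub_sq_eq_norm_sub_starProjection_sq_add {𝕜 E : Type*} [RCLike 𝕜]
    [NormedAddCommGroup E] [InnerProductSpace 𝕜 E] (K : Submodule 𝕜 E)
    [K.HasOrthogonalProjection] {v : E} (hv : v ∈ K) (y : E) :
    ‖v - y‖ ^ 2 = ‖v - K.starProjection y‖ ^ 2 + ‖y - K.starProjection y‖ ^ 2 := by
  have horth : ⟪v - K.starProjection y, y - K.starProjection y⟫_𝕜 = 0 :=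
    inner_eq_zero_symm.mp <|
      K.starProjection_inner_eq_zero y _ (K.sub_mem hv (K.starProjection_apply_mem y))
  rw [show v - y = (v - K.starProjection y) - (y - K.starProjection y) by abel,
    @norm_sub_sq 𝕜, horth, map_zero]
  ring

theorem tendsto_nhdsWithin_Ioi_of_norm_sub_sq_le {X Y : Type*} [Norm X]
    [SeminormedAddCommGroup Y] {f : ℝ → Y} {g : X → Y} {z : Y} (hz : z ∈ closure (Set.range g))
    (hf : ∀ α : ℝ, 0 < α → ∀ u, ‖f α - z‖ ^ 2 ≤ ‖g u - z‖ ^ 2 + α * ‖u‖ ^ 2) :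
    Tendsto f (𝓝[>] 0) (𝓝 z) := by
  refine Metric.tendsto_nhds.mpr fun ε hε => ?_
  obtain ⟨u, hu⟩ := Metric.mem_closure_range_iff.mp hz ε hε
  have hu' : ‖g u - z‖ ^ 2 < ε ^ 2 := by
    rw [← dist_eq_norm, dist_comm]
    gcongr
  have hbound : Tendsto (fun α : ℝ => ‖g u - z‖ ^ 2 + α * ‖u‖ ^ 2) (𝓝[>] 0)
      (𝓝 (‖g u - z‖ ^ 2)) := by
    refine tendsto_nhdsWithin_of_tendsto_nhds <|
      (by fun_prop : Continuous fun α : ℝ => ‖g u - z‖ ^ 2 + α * ‖u‖ ^ 2).tendsto' 0 _ ?_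
    simp
  filter_upwards [hbound.eventually_lt_const hu', self_mem_nhdsWithin] with α hα hαpos
  rw [dist_eq_norm, ← sq_lt_sq₀ (norm_nonneg _) hε.le]
  exact (hf α hαpos u).trans_lt hα

namespace ContinuousLinearMap

variable {𝕜 X Y : Type*} [RCLike 𝕜]
  [NormedAddCommGroup X] [InnerProductSpace 𝕜 X]
  [NormedAddCommGroup Y] [InnerProductSpace 𝕜 Y]

noncomputable def tikhonov (A : X →L[𝕜] Y) (y : Y) (α : ℝ) (u : X) : ℝ :=
  ‖A u - y‖ ^ 2 + α * ‖u‖ ^ 2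

theorem tikhonov_nonneg (A : X →L[𝕜] Y) (y : Y) {α : ℝ} (hα : 0 ≤ α) (u : X) :
    0 ≤ A.tikhonov y α u := by
  unfold tikhonov
  positivity

theorem tikhonov_eq_of_adjoint_eq [CompleteSpace X] [CompleteSpace Y] (A : X →L[𝕜] Y)
    {y : Y} {a : X} {α : ℝ} (ha : A.adjoint (A a) + (α : 𝕜) • a = A.adjoint y) (u : X) :
    A.tikhonov y α u = A.tikhonov y α a + A.tikhonov 0 α (u - a) := by
  set w := u - a
  have hnormal : re ⟪A a - y, A w⟫_𝕜 + α * re ⟪a, w⟫_𝕜 = 0 := by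
    have : A.adjoint (A a - y) + (α : 𝕜) • a = 0 := by
      rw [map_sub, sub_add_eq_add_sub, ha, sub_self]
    rw [← re_ofReal_mul, ← conj_ofReal, ← inner_smul_left, ← map_add,
      ← A.adjoint_inner_left, ← inner_add_left, this, inner_zero_left, map_zero]
  simp only [tikhonov, sub_zero]
  rw [show A u - y = (A a - y) + A w by simp [w], show u = a + w by simp [w],
    @norm_add_sq 𝕜, @norm_add_sq 𝕜 _ _ _ _ a w]
  linear_combination 2 * hnormal

theorem tikhonov_le_of_adjoint_eq [CompleteSpace X] [CompleteSpace Y] (A : X →L[𝕜] Y)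
    {y : Y} {a : X} {α : ℝ} (hα : 0 ≤ α) (ha : A.adjoint (A a) + (α : 𝕜) • a = A.adjoint y)
    (u : X) : A.tikhonov y α a ≤ A.tikhonov y α u := by
  rw [A.tikhonov_eq_of_adjoint_eq ha u]
  exact le_add_of_nonneg_right (A.tikhonov_nonneg 0 hα _)

theorem tikhonov_eq_tikhonov_starProjection_add (A : X →L[𝕜] Y) {K : Submodule 𝕜 Y}
    [K.HasOrthogonalProjection] (hK : LinearMap.range (A : X →ₗ[𝕜] Y) ≤ K)
    (y : Y) (α : ℝ) (u : X) :
    A.tikhonov y α u = A.tikhonov (K.starProjection y) α u + ‖y - K.starProjection y‖ ^ 2 := by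
  simp only [tikhonov]
  rw [K.norm_sub_sq_eq_norm_sub_starProjection_sq_add (v := A u) (hK ⟨u, rfl⟩)]
  ring

end ContinuousLinearMap

/-- **Regularized control converges to the orthogonal projection**
(Lemma 2.4, after [Oksanen, Lemma 1]).  Let `A : X → Y` be a bounded linear
operator between Hilbert spaces.  For `y ∈ Y` and `α > 0` let
`x_α := (A* A + α I)⁻¹ A* y`, i.e. `x_α` solves `(A* A + α I) x_α = A* y`.
Then `A x_α → P_{cl(Ran A)} y` as `α → 0⁺`, where `P_{cl(Ran A)}` is the
orthogonal projection onto the closure of the range of `A`. -/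
theorem regularized_control_tendsto_orthogonalProjection
    {𝕜 X Y : Type*} [RCLike 𝕜]
    [NormedAddCommGroup X] [InnerProductSpace 𝕜 X] [CompleteSpace X]
    [NormedAddCommGroup Y] [InnerProductSpace 𝕜 Y] [CompleteSpace Y]
    (A : X →L[𝕜] Y) (y : Y) (x : ℝ → X)
    (hx : ∀ α : ℝ, 0 < α →
      ContinuousLinearMap.adjoint A (A (x α)) + (α : 𝕜) • (x α) =
        ContinuousLinearMap.adjoint A y) :
    Tendsto (fun α : ℝ => A (x α)) (𝓝[>] 0)
      (𝓝 (Submodule.orthogonalProjectionOnto (LinearMap.range (A : X →ₗ[𝕜] Y)).topologicalClosure y : Y)) := by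
  set K := (LinearMap.range (A : X →ₗ[𝕜] Y)).topologicalClosure
  have hK : LinearMap.range (A : X →ₗ[𝕜] Y) ≤ K := Submodule.le_topologicalClosure _
  have hPy : K.starProjection y ∈ closure (Set.range A) := by
    have hmem := K.starProjection_apply_mem y
    rwa [← SetLike.mem_coe, Submodule.topologicalClosure_coe, LinearMap.coe_range] at hmem
  refine tendsto_nhdsWithin_Ioi_of_norm_sub_sq_le hPy fun α hα u => ?_
  have hmin := A.tikhonov_le_of_adjoint_eq hα.le (hx α hα) u
  rw [A.tikhonov_eq_tikhonov_starProjection_add hK y α (x α),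
    A.tikhonov_eq_tikhonov_starProjection_add hK y α u, add_le_add_iff_right] at hmin
  calc ‖A (x α) - K.starProjection y‖ ^ 2
      ≤ A.tikhonov (K.starProjection y) α (x α) :=
        le_add_of_nonneg_right (by positivity)
    _ ≤ _ := hmin
end

section
/- Let A : X → Y be a bounded linear operator between two Hilbert spaces X and Y whose range is dense in Y. For any y ∈ Y and α > 0, set x_α := (A* A + α I)⁻¹ A* y. Then A x_α → y in Y as α → 0⁺. -/
/-!
The regularized control `u = x α` is the minimizer of the Tikhonov functional
`z ↦ ‖A z - y‖² + α ‖z‖²`: its normal equation kills the cross terms when the functional is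
expanded around `u`. Comparing with any fixed `z` gives `‖A u - y‖² ≤ ‖A z - y‖² + α ‖z‖²`,
whose right-hand side tends to `‖A z - y‖²` as `α → 0⁺`, and by density of the range
`‖A z - y‖` can be made as small as we like.
-/

open Filter Topology RCLike

section

variable {𝕜 X Y : Type*} [RCLike 𝕜]
  [NormedAddCommGroup X] [InnerProductSpace 𝕜 X] [CompleteSpace X]
  [NormedAddCommGroup Y] [InnerProductSpace 𝕜 Y] [CompleteSpace Y]

def tikhonovFunctional (A : X →L[𝕜] Y) (y : Y) (α : ℝ) (z : X) : ℝ :=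
  ‖A z - y‖ ^ 2 + α * ‖z‖ ^ 2

variable {A : X →L[𝕜] Y} {y : Y} {α : ℝ} {u : X}

theorem re_inner_residual_add_re_inner_eq_zero
    (hu : ContinuousLinearMap.adjoint A (A u) + (α : 𝕜) • u = ContinuousLinearMap.adjoint A y)
    (w : X) : re (inner 𝕜 (A u - y) (A w)) + α * re (inner 𝕜 u w) = 0 := by
  have hnormal : ContinuousLinearMap.adjoint A (A u - y) + (α : 𝕜) • u = 0 := by
    rw [map_sub, sub_add_eq_add_sub, hu, sub_self]
  have h := congrArg (fun v => re (inner 𝕜 v w)) hnormal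
  simpa only [inner_add_left, ContinuousLinearMap.adjoint_inner_left, inner_smul_left,
    conj_ofReal, map_add, re_ofReal_mul, inner_zero_left, map_zero] using h

theorem tikhonovFunctional_eq_add
    (hu : ContinuousLinearMap.adjoint A (A u) + (α : 𝕜) • u = ContinuousLinearMap.adjoint A y)
    (z : X) :
    tikhonovFunctional A y α z =
      tikhonovFunctional A y α u + (‖A (z - u)‖ ^ 2 + α * ‖z - u‖ ^ 2) := by
  have hcross := re_inner_residual_add_re_inner_eq_zero hu (z - u)
  have hres : ‖A z - y‖ ^ 2 =
      ‖A u - y‖ ^ 2 + 2 * re (inner 𝕜 (A u - y) (A (z - u))) + ‖A (z - u)‖ ^ 2 := by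
    rw [← norm_add_sq, map_sub, sub_add_sub_cancel']
  have hreg : ‖z‖ ^ 2 = ‖u‖ ^ 2 + 2 * re (inner 𝕜 u (z - u)) + ‖z - u‖ ^ 2 := by
    rw [← norm_add_sq, add_sub_cancel]
  unfold tikhonovFunctional
  rw [hres, hreg]
  linear_combination 2 * hcross

theorem tikhonovFunctional_le (hα : 0 ≤ α)
    (hu : ContinuousLinearMap.adjoint A (A u) + (α : 𝕜) • u = ContinuousLinearMap.adjoint A y)
    (z : X) : tikhonovFunctional A y α u ≤ tikhonovFunctional A y α z := by
  rw [tikhonovFunctional_eq_add hu z]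
  have : 0 ≤ α * ‖z - u‖ ^ 2 := by positivity
  nlinarith [sq_nonneg ‖A (z - u)‖]

theorem norm_residual_sq_le (hα : 0 ≤ α)
    (hu : ContinuousLinearMap.adjoint A (A u) + (α : 𝕜) • u = ContinuousLinearMap.adjoint A y)
    (z : X) : ‖A u - y‖ ^ 2 ≤ ‖A z - y‖ ^ 2 + α * ‖z‖ ^ 2 := by
  have hmin := tikhonovFunctional_le hα hu z
  have : 0 ≤ α * ‖u‖ ^ 2 := by positivity
  unfold tikhonovFunctional at hmin
  linarith

end

/-- **Regularized control with dense range.**  Let `A : X → Y` be a bounded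
linear operator between Hilbert spaces whose range is dense in `Y`.  For
`y ∈ Y` and `α > 0` let `x_α := (A* A + α I)⁻¹ A* y`, i.e. `x_α` solves
`(A* A + α I) x_α = A* y`.  Then `A x_α → y` in `Y` as `α → 0⁺`. -/
theorem regularized_control_tendsto_of_denseRange
    {𝕜 X Y : Type*} [RCLike 𝕜]
    [NormedAddCommGroup X] [InnerProductSpace 𝕜 X] [CompleteSpace X]
    [NormedAddCommGroup Y] [InnerProductSpace 𝕜 Y] [CompleteSpace Y]
    (A : X →L[𝕜] Y) (hA : DenseRange A) (y : Y) (x : ℝ → X)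
    (hx : ∀ α : ℝ, 0 < α →
      ContinuousLinearMap.adjoint A (A (x α)) + (α : 𝕜) • (x α) =
        ContinuousLinearMap.adjoint A y) :
    Tendsto (fun α : ℝ => A (x α)) (𝓝[>] 0) (𝓝 y) := by
  rw [Metric.tendsto_nhds]
  intro ε hε
  obtain ⟨z, hz⟩ := hA.exists_dist_lt y hε
  have hz_sq : ‖A z - y‖ ^ 2 < ε ^ 2 := by
    rw [← dist_eq_norm, dist_comm]
    gcongr
  have hbound : Tendsto (fun α : ℝ => ‖A z - y‖ ^ 2 + α * ‖z‖ ^ 2) (𝓝[>] 0)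
      (𝓝 (‖A z - y‖ ^ 2)) :=
    tendsto_nhdsWithin_of_tendsto_nhds <|
      (by fun_prop : Continuous fun α : ℝ => ‖A z - y‖ ^ 2 + α * ‖z‖ ^ 2).tendsto' 0 _
        (by simp)
  filter_upwards [self_mem_nhdsWithin, hbound.eventually (gt_mem_nhds hz_sq)] with α hα hα_lt
  have hres := norm_residual_sq_le (le_of_lt hα) (hx α hα) z
  rw [dist_eq_norm]
  exact lt_of_pow_lt_pow_left₀ 2 hε.le (hres.trans_lt hα_lt)
end
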